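/- Fix L ≥ 1, probabilities p_1,…,p_L and a mean μ > 0 with κ ≥ L+1, and let H = H(μ,p_L). If z̃_H ≤ e^{−2/(L+1)}, then for every F ∈ F(μ,p_L) one has g_F'(z̃_H) ≥ g_H'(z̃_H), and consequently z̃_F ≥ z̃_H. -/

import Mathlib

open scoped BigOperators

/-- A degree distribution: a sequence of nonnegative probabilities on the positive
integers summing to one, with finite mean and `p 2 ≠ 1`. -/
structure DegreeDist where
  p : ℕ → ℝ
  nonneg : ∀ d, 0 ≤ p d
  zero : p 0 = 0
  psummable : Summable p
  sum_one : ∑' d : ℕ, p d = 1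
  mean_summable : Summable fun d : ℕ => (d : ℝ) * p d
  two_ne_one : p 2 ≠ 1

/-- The mean `μ_F` of a degree distribution. -/
noncomputable def mu (F : DegreeDist) : ℝ := ∑' d : ℕ, (d : ℝ) * F.p d

/-- The probability generating function `g_F`. -/
noncomputable def pgf (F : DegreeDist) (s : ℝ) : ℝ := ∑' d : ℕ, F.p d * s ^ d

/-- The derivative `g_F'` of the probability generating function. -/
noncomputable def pgfD (F : DegreeDist) (s : ℝ) : ℝ := ∑' d : ℕ, (d : ℝ) * F.p d * s ^ (d - 1)

/-- `z` is the smallest `s ∈ [0,1]` with `m * s = g_F'(s)`.  Taking `m = mu F` gives `z̃_F`;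
taking `m = μ` gives `z̃_F^{(μ)}`. -/
def IsSmallestRoot (F : DegreeDist) (m z : ℝ) : Prop :=
  z ∈ Set.Icc (0 : ℝ) 1 ∧ m * z = pgfD F z ∧
    ∀ s ∈ Set.Icc (0 : ℝ) 1, m * s = pgfD F s → z ≤ s

/-- Membership in the class `F(p_L)`: the first `L` probabilities agree with `p`. -/
def MemF (L : ℕ) (p : ℕ → ℝ) (F : DegreeDist) : Prop :=
  ∀ d, 1 ≤ d → d ≤ L → F.p d = p d

/-- The remaining mass `p_{>L} = 1 - ∑_{i=1}^L p_i`. -/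
noncomputable def pGt (L : ℕ) (p : ℕ → ℝ) : ℝ := 1 - ∑ i ∈ Finset.Icc 1 L, p i

/-- The distribution `G = G(p_L)`: all remaining mass at `L+1`. -/
def IsG (L : ℕ) (p : ℕ → ℝ) (G : DegreeDist) : Prop :=
  (∀ d, 1 ≤ d → d ≤ L → G.p d = p d) ∧
  G.p (L + 1) = pGt L p ∧
  ∀ d, L + 1 < d → G.p d = 0

/-- `κ = (μ - ∑_{d=1}^L d p_d) / p_{>L}`. -/
noncomputable def kappa (L : ℕ) (p : ℕ → ℝ) (μ : ℝ) : ℝ :=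
  (μ - ∑ d ∈ Finset.Icc 1 L, (d : ℝ) * p d) / pGt L p

/-- `r_m = (κ - (L+1)) / (m - (L+1))`. -/
noncomputable def rmass (L : ℕ) (κ : ℝ) (m : ℕ) : ℝ :=
  (κ - ((L : ℝ) + 1)) / ((m : ℝ) - ((L : ℝ) + 1))

/-- The distribution `G_m`: mass `(1-r_m) p_{>L}` at `L+1` and `r_m p_{>L}` at `m`. -/
def IsGm (L : ℕ) (p : ℕ → ℝ) (μ : ℝ) (m : ℕ) (Gm : DegreeDist) : Prop :=
  (∀ d, 1 ≤ d → d ≤ L → Gm.p d = p d) ∧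
  Gm.p (L + 1) = (1 - rmass L (kappa L p μ) m) * pGt L p ∧
  Gm.p m = rmass L (kappa L p μ) m * pGt L p ∧
  ∀ d, L + 1 < d → d ≠ m → Gm.p d = 0

/-- The distribution `H = H(μ, p_L)`: remaining mass at `⌊κ⌋` and `⌊κ⌋+1`, preserving mean `μ`. -/
def IsH (L : ℕ) (p : ℕ → ℝ) (μ : ℝ) (H : DegreeDist) : Prop :=
  (∀ d, 1 ≤ d → d ≤ L → H.p d = p d) ∧
  H.p ⌊kappa L p μ⌋₊ = ((⌊kappa L p μ⌋₊ : ℝ) + 1 - kappa L p μ) * pGt L p ∧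
  H.p (⌊kappa L p μ⌋₊ + 1) = (kappa L p μ - (⌊kappa L p μ⌋₊ : ℝ)) * pGt L p ∧
  ∀ d, L < d → d ≠ ⌊kappa L p μ⌋₊ → d ≠ ⌊kappa L p μ⌋₊ + 1 → H.p d = 0

/-!
For `0 < s ≤ e^{-2/(L+1)}` the map `x ↦ x s^{x-1} = x e^{c(x-1)}` with `c = log s ≤ -2/(L+1)` is
convex on `[L+1, ∞)`, so at every integer `d > L` it lies above the secant line `ℓ` through
`k = ⌊κ⌋` and `k+1`. Replacing `d s^{d-1}` by `ℓ(d)` for `d > L` lowers `g_F'(s)` to a quantity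
that only depends on `p_L` and the mean `μ`, because `ℓ` is affine; for `H`, whose tail lives on
`{k, k+1}`, nothing is lost. Hence `g_H'(s) ≤ g_F'(s)`. If `z̃_F < z̃_H`, this at `s = z̃_F` gives
`g_H'(z̃_F) ≤ μ z̃_F`, and the intermediate value theorem yields a root of `μ s = g_H'(s)` in
`[0, z̃_F]`, below `z̃_H`.
-/

open Real

lemma ConvexOn.add_mul_slope_le {𝕜 : Type*} [Field 𝕜] [LinearOrder 𝕜] [IsStrictOrderedRing 𝕜]
    {s : Set 𝕜} {f : 𝕜 → 𝕜} (hf : ConvexOn 𝕜 s f) {a b x : 𝕜} (ha : a ∈ s) (hb : b ∈ s)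
    (hx : x ∈ s) (hab : a < b) (hxab : x ∉ Set.Ioo a b) :
    f a + (x - a) * slope f a b ≤ f x := by
  rw [slope_def_field]
  rcases lt_trichotomy x a with hxa | rfl | hax
  · have h := hf.secant_mono ha hx hb hxa.ne hab.ne' (hxa.trans hab).le
    rw [div_le_iff_of_neg (sub_neg.2 hxa)] at h
    linarith
  · simp
  · have hbx : b ≤ x := not_lt.1 fun hxb => hxab ⟨hax, hxb⟩
    have h := hf.secant_mono ha hb hx hab.ne' hax.ne' hbx
    rw [le_div_iff₀ (sub_pos.2 hax)] at h
    linarith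

lemma convexOn_mul_exp_mul_sub_one {c T : ℝ} (hT : 0 < T) (hcT : c * T ≤ -2) :
    ConvexOn ℝ (Set.Ici T) fun x => x * exp (c * (x - 1)) := by
  have hE : ∀ x, HasDerivAt (fun y => exp (c * (y - 1))) (exp (c * (x - 1)) * c) x := fun x => by
    simpa using (((hasDerivAt_id x).sub_const 1).const_mul c).exp
  refine convexOn_of_hasDerivWithinAt2_nonneg (convex_Ici T) (by fun_prop)
    (f' := fun x => (1 + c * x) * exp (c * (x - 1)))
    (f'' := fun x => c * (2 + c * x) * exp (c * (x - 1)))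
    (fun x _ => ?_) (fun x _ => ?_) (fun x hx => ?_)
  · exact (((hasDerivAt_id x).mul (hE x)).congr_deriv (by simp only [id_eq]; ring)).hasDerivWithinAt
  · exact ((((hasDerivAt_id x).const_mul c).const_add 1).mul (hE x)).congr_deriv
      (by simp only [id_eq]; ring) |>.hasDerivWithinAt
  · rw [interior_Ici] at hx
    have hc : c < 0 := by nlinarith
    have hcx : c * x ≤ c * T := mul_le_mul_of_nonpos_left hx.le hc.le
    exact mul_nonneg (by nlinarith) (exp_pos _).le

lemma secant_le_natCast_mul_pow {T s : ℝ} (hT : 0 < T) (hs₀ : 0 ≤ s) (hs : s ≤ exp (-(2 / T)))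
    {k d : ℕ} (hk : T ≤ k) (hd : T ≤ d) :
    k * s ^ (k - 1) + (d - k) * ((k + 1) * s ^ k - k * s ^ (k - 1)) ≤ d * s ^ (d - 1) := by
  obtain ⟨k, rfl⟩ : ∃ j, k = j + 1 := Nat.exists_eq_add_one.2 (by exact_mod_cast hT.trans_le hk)
  obtain ⟨d, rfl⟩ : ∃ j, d = j + 1 := Nat.exists_eq_add_one.2 (by exact_mod_cast hT.trans_le hd)
  -- `s = 0` is out of reach of `log`; there both sides are explicit
  rcases hs₀.eq_or_lt with rfl | hs₀
  · rcases k with _ | k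
    · rcases d with _ | d <;> simp
    · calc _ = (0 : ℝ) := by simp
        _ ≤ _ := by positivity
  set c := log s
  have hcT : c * T ≤ -2 := by
    have h := (log_le_log hs₀ hs).trans_eq (log_exp _)
    rw [le_neg, div_le_iff₀ hT] at h
    linarith
  have hval : ∀ n : ℕ, ((n + 1 : ℕ) : ℝ) * exp (c * ((n + 1 : ℕ) - 1)) = (n + 1) * s ^ n := by
    intro n
    rw [Nat.cast_succ, add_sub_cancel_right, mul_comm c, exp_nat_mul, exp_log hs₀]
  have hnotin : ((d + 1 : ℕ) : ℝ) ∉ Set.Ioo ((k + 1 : ℕ) : ℝ) ((k + 1 + 1 : ℕ) : ℝ) := by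
    rintro ⟨h₁, h₂⟩
    have : k + 1 < d + 1 := by exact_mod_cast h₁
    have : d + 1 < k + 1 + 1 := by exact_mod_cast h₂
    omega
  have hk' : T ≤ ((k + 1 + 1 : ℕ) : ℝ) := hk.trans (by push_cast; linarith)
  have h := (convexOn_mul_exp_mul_sub_one hT hcT).add_mul_slope_le hk hk' hd
    (by push_cast; linarith) hnotin
  rw [slope_def_field, hval, hval, hval] at h
  push_cast at h ⊢
  simpa using h

namespace DegreeDist

variable (F : DegreeDist)

lemma norm_pgfD_term_le {s : ℝ} (hs : s ∈ Set.Icc (0 : ℝ) 1) (d : ℕ) :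
    ‖(d : ℝ) * F.p d * s ^ (d - 1)‖ ≤ d * F.p d := by
  have hdp : 0 ≤ (d : ℝ) * F.p d := mul_nonneg d.cast_nonneg (F.nonneg d)
  rw [Real.norm_of_nonneg (mul_nonneg hdp (pow_nonneg hs.1 _))]
  exact mul_le_of_le_one_right hdp (pow_le_one₀ hs.1 hs.2)

lemma summable_pgfD_term {s : ℝ} (hs : s ∈ Set.Icc (0 : ℝ) 1) :
    Summable fun d : ℕ => (d : ℝ) * F.p d * s ^ (d - 1) :=
  F.mean_summable.of_norm_bounded (F.norm_pgfD_term_le hs)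

lemma continuousOn_pgfD : ContinuousOn (pgfD F) (Set.Icc 0 1) :=
  continuousOn_tsum (fun _ => by fun_prop) F.mean_summable fun d _ hs => F.norm_pgfD_term_le hs d

lemma pgfD_nonneg {s : ℝ} (hs : 0 ≤ s) : 0 ≤ pgfD F s :=
  tsum_nonneg fun d => by have := F.nonneg d; positivity

lemma hasSum_mul_of_affine {L : ℕ} {w : ℕ → ℝ} {α β : ℝ} (hw : ∀ d, L < d → w d = α + β * d) :
    HasSum (fun d => F.p d * w d)
      (α + β * mu F + ∑ d ∈ Finset.Icc 1 L, F.p d * (w d - (α + β * d))) := by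
  have haff : HasSum (fun d : ℕ => F.p d * (α + β * d)) (α + β * mu F) := by
    have h := (F.psummable.hasSum.mul_left α).add (F.mean_summable.hasSum.mul_left β)
    rw [F.sum_one, mul_one] at h
    rw [show (fun d : ℕ => F.p d * (α + β * d)) = fun d => α * F.p d + β * (d * F.p d) from
      funext fun d => by ring]
    exact h
  have hhead : HasSum (fun d => F.p d * (w d - (α + β * d)))
      (∑ d ∈ Finset.Icc 1 L, F.p d * (w d - (α + β * d))) := by
    refine hasSum_sum_of_ne_finset_zero fun d hd => ?_
    rcases Nat.eq_zero_or_pos d with rfl | hd₀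
    · rw [F.zero, zero_mul]
    · rw [hw d (by rw [Finset.mem_Icc] at hd; omega), sub_self, mul_zero]
  convert haff.add hhead using 1
  funext d
  ring

lemma tsum_mul_eq_of_affine {G : DegreeDist} {L : ℕ} (hhead : ∀ d, 1 ≤ d → d ≤ L → F.p d = G.p d)
    (hmu : mu F = mu G) {w : ℕ → ℝ} {α β : ℝ} (hw : ∀ d, L < d → w d = α + β * d) :
    ∑' d, F.p d * w d = ∑' d, G.p d * w d := by
  rw [(F.hasSum_mul_of_affine hw).tsum_eq, (G.hasSum_mul_of_affine hw).tsum_eq, hmu]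
  congr 1
  refine Finset.sum_congr rfl fun d hd => ?_
  rw [Finset.mem_Icc] at hd
  rw [hhead d hd.1 hd.2]

end DegreeDist

lemma IsSmallestRoot.le_of_pgfD_le {F : DegreeDist} {m z t : ℝ} (hz : IsSmallestRoot F m z)
    (ht : t ∈ Set.Icc (0 : ℝ) 1) (h : pgfD F t ≤ m * t) : z ≤ t := by
  have hcont : ContinuousOn (fun u => m * u - pgfD F u) (Set.Icc 0 t) :=
    ((continuousOn_const.mul continuousOn_id).sub F.continuousOn_pgfD).mono
      (Set.Icc_subset_Icc_right ht.2)
  have hsign : (0 : ℝ) ∈ Set.Icc (m * 0 - pgfD F 0) (m * t - pgfD F t) :=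
    ⟨by linarith [F.pgfD_nonneg le_rfl], by linarith⟩
  obtain ⟨u, hu, hroot⟩ := intermediate_value_Icc ht.1 hcont hsign
  exact (hz.2.2 u ⟨hu.1, hu.2.trans ht.2⟩ (sub_eq_zero.1 hroot)).trans hu.2

lemma lt_floor_kappa {L : ℕ} {p : ℕ → ℝ} {μ : ℝ} (hκ : (L : ℝ) + 1 ≤ kappa L p μ) :
    L < ⌊kappa L p μ⌋₊ :=
  Nat.le_floor (by exact_mod_cast hκ)

namespace IsH

variable {L : ℕ} {p : ℕ → ℝ} {μ : ℝ} {H : DegreeDist}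

lemma mu_eq (hplt : ∑ i ∈ Finset.Icc 1 L, p i < 1) (hκ : (L : ℝ) + 1 ≤ kappa L p μ)
    (hH : IsH L p μ H) : mu H = μ := by
  set k := ⌊kappa L p μ⌋₊
  have hLk : L < k := lt_floor_kappa hκ
  have hsupp : ∀ d ∉ Finset.Icc 1 L ∪ {k, k + 1}, (d : ℝ) * H.p d = 0 := fun d hd => by
    simp only [Finset.mem_union, Finset.mem_Icc, Finset.mem_insert, Finset.mem_singleton] at hd
    rcases Nat.eq_zero_or_pos d with rfl | hd₀
    · simp
    · rw [hH.2.2.2 d (by omega) (by omega) (by omega), mul_zero]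
  have hdisj : Disjoint (Finset.Icc 1 L) {k, k + 1} :=
    Finset.disjoint_left.2 fun d hd hd' => by
      simp only [Finset.mem_Icc, Finset.mem_insert, Finset.mem_singleton] at hd hd'; omega
  have hκμ : kappa L p μ * pGt L p = μ - ∑ d ∈ Finset.Icc 1 L, (d : ℝ) * p d :=
    div_mul_cancel₀ _ (by unfold pGt; linarith)
  have hhead : ∑ d ∈ Finset.Icc 1 L, (d : ℝ) * H.p d = ∑ d ∈ Finset.Icc 1 L, (d : ℝ) * p d :=
    Finset.sum_congr rfl fun d hd => by rw [Finset.mem_Icc] at hd; rw [hH.1 d hd.1 hd.2]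
  rw [mu, tsum_eq_sum hsupp, Finset.sum_union hdisj, Finset.sum_pair (by omega), hH.2.2.1, hH.2.1]
  push_cast
  linear_combination hhead + hκμ

lemma pgfD_le (hplt : ∑ i ∈ Finset.Icc 1 L, p i < 1) (hκ : (L : ℝ) + 1 ≤ kappa L p μ)
    (hH : IsH L p μ H) {F : DegreeDist} (hF : MemF L p F) (hFmu : mu F = μ) {s : ℝ}
    (hs₀ : 0 ≤ s) (hs : s ≤ exp (-(2 / ((L : ℝ) + 1)))) : pgfD H s ≤ pgfD F s := by
  set k := ⌊kappa L p μ⌋₊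
  have hLk : L < k := lt_floor_kappa hκ
  have hs₁ : s ≤ 1 := hs.trans (exp_le_one_iff.2 (by rw [neg_nonpos]; positivity))
  set b : ℝ := (k + 1) * s ^ k - k * s ^ (k - 1)
  -- beyond `L`, `w` is the secant of `x ↦ x s^{x-1}` through `k` and `k + 1`
  set w : ℕ → ℝ := fun d => if d ≤ L then d * s ^ (d - 1) else k * s ^ (k - 1) + (d - k) * b
  have hw_le : ∀ d, w d ≤ d * s ^ (d - 1) := fun d => by
    by_cases hdL : d ≤ L
    · simp [w, hdL]
    · simp only [w, if_neg hdL]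
      exact secant_le_natCast_mul_pow (by positivity) hs₀ hs (by exact_mod_cast hLk)
        (by exact_mod_cast not_le.1 hdL)
  have hH_w : ∀ d : ℕ, (d : ℝ) * H.p d * s ^ (d - 1) = H.p d * w d := fun d => by
    by_cases hdL : d ≤ L
    · simp only [w, if_pos hdL]; ring
    simp only [w, if_neg hdL]
    by_cases hdk : d = k
    · subst hdk; ring
    by_cases hdk' : d = k + 1
    · subst hdk'; simp only [b, Nat.cast_succ, Nat.add_sub_cancel]; ring
    · rw [hH.2.2.2 d (not_le.1 hdL) hdk hdk']; ring
  have hw_aff : ∀ d, L < d → w d = (k * s ^ (k - 1) - k * b) + b * d := fun d hd => by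
    simp only [w, if_neg (not_le.2 hd)]; ring
  calc pgfD H s = ∑' d, H.p d * w d := tsum_congr hH_w
    _ = ∑' d, F.p d * w d :=
      H.tsum_mul_eq_of_affine (fun d h₁ h₂ => (hH.1 d h₁ h₂).trans (hF d h₁ h₂).symm)
        (by rw [hH.mu_eq hplt hκ, hFmu]) hw_aff
    _ ≤ pgfD F s :=
      (F.hasSum_mul_of_affine hw_aff).summable.tsum_le_tsum
        (fun d => by nlinarith [hw_le d, F.nonneg d]) (F.summable_pgfD_term ⟨hs₀, hs₁⟩)

end IsH

theorem tail_does_not_determine_giant_stmt15_general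
    (L : ℕ) (p : ℕ → ℝ)
    (hplt : ∑ i ∈ Finset.Icc 1 L, p i < 1)
    (μ : ℝ) (hκ : (L : ℝ) + 1 ≤ kappa L p μ)
    (H : DegreeDist) (hH : IsH L p μ H)
    (zH : ℝ) (hzH : IsSmallestRoot H (mu H) zH)
    (hcond : zH ≤ Real.exp (-(2 / ((L : ℝ) + 1))))
    (F : DegreeDist) (hF : MemF L p F) (hFmu : mu F = μ)
    (zF : ℝ) (hzF : IsSmallestRoot F (mu F) zF) :
    pgfD H zH ≤ pgfD F zH ∧ zH ≤ zF := by
  refine ⟨hH.pgfD_le hplt hκ hF hFmu hzH.1.1 hcond, ?_⟩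
  rcases le_total zH zF with h | h
  · exact h
  · refine hzH.le_of_pgfD_le hzF.1 ?_
    rw [hH.mu_eq hplt hκ, ← hFmu, hzF.2.1]
    exact hH.pgfD_le hplt hκ hF hFmu hzF.1.1 (h.trans hcond)

/-- If `κ ≥ L+1` and `z̃_H ≤ e^{-2/(L+1)}`, then for every `F ∈ F(μ, p_L)`,
`g_F'(z̃_H) ≥ g_H'(z̃_H)` and consequently `z̃_F ≥ z̃_H`. -/
theorem tail_does_not_determine_giant_stmt15
    (L : ℕ) (hL : 1 ≤ L) (p : ℕ → ℝ)
    (hp : ∀ i, 0 ≤ p i) (hplt : ∑ i ∈ Finset.Icc 1 L, p i < 1)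
    (μ : ℝ) (hμ : 0 < μ) (hκ : (L : ℝ) + 1 ≤ kappa L p μ)
    (H : DegreeDist) (hH : IsH L p μ H)
    (zH : ℝ) (hzH : IsSmallestRoot H (mu H) zH)
    (hcond : zH ≤ Real.exp (-(2 / ((L : ℝ) + 1))))
    (F : DegreeDist) (hF : MemF L p F) (hFmu : mu F = μ)
    (zF : ℝ) (hzF : IsSmallestRoot F (mu F) zF) :
    pgfD H zH ≤ pgfD F zH ∧ zH ≤ zF :=
  tail_does_not_determine_giant_stmt15_general L p hplt μ hκ H hH zH hzH hcond F hF hFmu zF hzF
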